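/- arXiv:2009.12143 — 2 statements merged into one kernel-verified Lean document; each statement's English description precedes it below -/
import Mathlib

section
/- Let 0 < a < b be real numbers and set z = (a/b)^2. Then for every natural number m, the series ∑_{n=1}^∞ ((m+n)!/(m!·n!))^2 · z^n converges, and there is a constant C (independent of m) and a sub-exponential factor s(m) such that ∑_{n=1}^∞ ((m+n)!/(m!·n!))^2 z^n ≤ s(m) · (b^2/(b^2−a^2))^m · ((b+a)/(b−a))^m, where s(m)^{1/m} → 1 as m → ∞. Equivalently, limsup_{m→∞} (∑_{n=1}^∞ ((m+n)!/(m!n!))^2 z^n)^{1/m} ≤ (b^2/(b^2−a^2)) · ((b+a)/(b−a)). -/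
/-!
With `x = a / b`, the `n`-th term is `(C(n + m, m) xⁿ)²`. The negative binomial series gives
`∑ C(n + m, m) xⁿ = (1 - x)⁻⁽ᵐ⁺¹⁾`, and the squares of a nonnegative summable sequence sum to
at most the square of its sum, so the series is at most `((1 - x)⁻²)ᵐ⁺¹`. Its `m`-th root thus has
limsup at most `(1 - x)⁻² = (b / (b - a))²`, which is the stated constant.
-/

open Filter Topology

theorem sq_le_tsum_mul_of_nonneg {ι : Type*} {f : ι → ℝ} (hf : Summable f) (h0 : ∀ i, 0 ≤ f i)
    (i : ι) : f i ^ 2 ≤ (∑' j, f j) * f i := by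
  rw [sq]; exact mul_le_mul_of_nonneg_right (hf.le_tsum i fun j _ => h0 j) (h0 i)

theorem summable_sq_of_nonneg {ι : Type*} {f : ι → ℝ} (hf : Summable f) (h0 : ∀ i, 0 ≤ f i) :
    Summable (fun i => f i ^ 2) :=
  (hf.mul_left _).of_nonneg_of_le (fun i => sq_nonneg (f i)) (sq_le_tsum_mul_of_nonneg hf h0)

theorem tsum_sq_le_sq_tsum {ι : Type*} {f : ι → ℝ} (hf : Summable f) (h0 : ∀ i, 0 ≤ f i) :
    ∑' i, f i ^ 2 ≤ (∑' i, f i) ^ 2 :=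
  calc ∑' i, f i ^ 2 ≤ ∑' i, (∑' j, f j) * f i :=
        (summable_sq_of_nonneg hf h0).tsum_le_tsum (sq_le_tsum_mul_of_nonneg hf h0) (hf.mul_left _)
    _ = (∑' i, f i) ^ 2 := by rw [tsum_mul_left, sq]

theorem limsup_rpow_one_div_le_of_le_mul_pow {u : ℕ → ℝ} {C c : ℝ} (hC : 0 < C)
    (hu0 : ∀ m, 0 ≤ u m) (hu : ∀ m, u m ≤ C * c ^ m) :
    limsup (fun m : ℕ => u m ^ ((1 : ℝ) / m)) atTop ≤ c := by
  have hc : 0 ≤ c := nonneg_of_mul_nonneg_right (by simpa using (hu0 1).trans (hu 1)) hC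
  have hlim : Tendsto (fun m : ℕ => C ^ ((1 : ℝ) / m) * c) atTop (𝓝 c) := by
    have := ((Real.continuousAt_const_rpow hC.ne').tendsto.comp
      tendsto_one_div_atTop_nhds_zero_nat).mul_const c
    simpa only [Function.comp_def, Real.rpow_zero, one_mul] using this
  have hle : ∀ᶠ m : ℕ in atTop, u m ^ ((1 : ℝ) / m) ≤ C ^ ((1 : ℝ) / m) * c := by
    filter_upwards [eventually_ne_atTop 0] with m hm
    calc u m ^ ((1 : ℝ) / m) ≤ (C * c ^ m) ^ ((1 : ℝ) / m) :=
          Real.rpow_le_rpow (hu0 m) (hu m) (by positivity)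
      _ = C ^ ((1 : ℝ) / m) * c := by
          rw [Real.mul_rpow hC.le (by positivity), one_div, Real.pow_rpow_inv_natCast hc hm]
  calc limsup (fun m : ℕ => u m ^ ((1 : ℝ) / m)) atTop
      ≤ limsup (fun m : ℕ => C ^ ((1 : ℝ) / m) * c) atTop :=
        limsup_le_limsup hle
          (isCoboundedUnder_le_of_le atTop fun m => Real.rpow_nonneg (hu0 m) _)
          hlim.isBoundedUnder_le
    _ = c := hlim.limsup_eq

theorem factorial_div_sq_mul_sq_pow (x : ℝ) (m k : ℕ) :
    (((m + k).factorial : ℝ) / ((m.factorial : ℝ) * (k.factorial : ℝ))) ^ 2 * (x ^ 2) ^ k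
      = (((k + m).choose m : ℝ) * x ^ k) ^ 2 := by
  rw [add_comm k m, Nat.cast_add_choose]; ring

theorem hasSum_choose_mul_geometric_succ_of_norm_lt_one {𝕜 : Type*} [NormedDivisionRing 𝕜]
    (m : ℕ) {r : 𝕜} (hr : ‖r‖ < 1) :
    HasSum (fun n => ((n + 1 + m).choose m : 𝕜) * r ^ (n + 1)) (1 / (1 - r) ^ (m + 1) - 1) := by
  have h := (hasSum_nat_add_iff' (f := fun n => ((n + m).choose m : 𝕜) * r ^ n) 1).2
    (hasSum_choose_mul_geometric_of_norm_lt_one m hr)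
  simpa only [Finset.sum_range_one, zero_add, Nat.choose_self, Nat.cast_one, pow_zero,
    mul_one] using h

theorem hypergeometric_series_growth_rate (a b : ℝ) (ha : 0 < a) (hab : a < b) :
    (∀ m : ℕ, Summable (fun n : ℕ =>
        (((m + (n + 1)).factorial : ℝ) / ((m.factorial : ℝ) * ((n + 1).factorial : ℝ))) ^ 2
          * ((a / b) ^ 2) ^ (n + 1))) ∧
    limsup
      (fun m : ℕ =>
        (∑' n : ℕ,
            (((m + (n + 1)).factorial : ℝ) / ((m.factorial : ℝ) * ((n + 1).factorial : ℝ))) ^ 2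
              * ((a / b) ^ 2) ^ (n + 1)) ^ ((1 : ℝ) / m))
      atTop
      ≤ (b ^ 2 / (b ^ 2 - a ^ 2)) * ((b + a) / (b - a)) := by
  have hb : 0 < b := ha.trans hab
  have hx : 0 < a / b := div_pos ha hb
  have h1x : 0 < 1 - a / b := by linarith [(div_lt_one hb).2 hab]
  have hg := fun m => hasSum_choose_mul_geometric_succ_of_norm_lt_one m
    (show ‖a / b‖ < 1 by rw [Real.norm_of_nonneg hx.le]; linarith)
  have hg0 : ∀ m n, 0 ≤ ((n + 1 + m).choose m : ℝ) * (a / b) ^ (n + 1) := fun m n => by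
    positivity
  have hbound : ∀ m, ∑' n, (((n + 1 + m).choose m : ℝ) * (a / b) ^ (n + 1)) ^ 2
      ≤ ((1 - a / b) ^ 2)⁻¹ * ((1 - a / b) ^ 2)⁻¹ ^ m := fun m =>
    calc _ ≤ (1 / (1 - a / b) ^ (m + 1) - 1) ^ 2 := by
          rw [← (hg m).tsum_eq]; exact tsum_sq_le_sq_tsum (hg m).summable (hg0 m)
      _ ≤ (1 / (1 - a / b) ^ (m + 1)) ^ 2 :=
          pow_le_pow_left₀ ((hg m).nonneg (hg0 m)) (by linarith) 2
      _ = ((1 - a / b) ^ 2)⁻¹ * ((1 - a / b) ^ 2)⁻¹ ^ m := by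
          rw [← pow_succ', one_div, inv_pow, inv_pow, ← pow_mul, ← pow_mul, mul_comm]
  simp only [factorial_div_sq_mul_sq_pow]
  refine ⟨fun m => summable_sq_of_nonneg (hg m).summable (hg0 m),
    (limsup_rpow_one_div_le_of_le_mul_pow (by positivity)
      (fun m => tsum_nonneg fun n => sq_nonneg _) hbound).trans_eq ?_⟩
  have : b - a ≠ 0 := by linarith
  have : b + a ≠ 0 := by linarith
  have : b ^ 2 - a ^ 2 ≠ 0 := by nlinarith
  field_simp
  ring
end

section
/- Let 0 < a_p, 0 < a_q < d and suppose a_p < d − a_q. Define σ(m,n) = ((m+n)/m)^{2m} · ((m+n)/n)^{2n} · (a_p/d)^{2m} · (a_q/d)^{2n} for positive integers m, n. Then limsup_{m→∞} (∑_{n=1}^∞ σ(m,n))^{1/m} ≤ (a_p/(d − a_q))^2. -/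
open Filter Topology

/-- The term `σ(m,n)` arising from large-order asymptotics of Hankel and Bessel functions. -/
noncomputable def sigmaTerm (a_p a_q d : ℝ) (m n : ℕ) : ℝ :=
  (((m : ℝ) + n) / m) ^ (2 * m) * (((m : ℝ) + n) / n) ^ (2 * n)
    * (a_p / d) ^ (2 * m) * (a_q / d) ^ (2 * n)

/-! Write x = a_p / d, y = a_q / d and fix t ∈ (0, 1). Weighted AM-GM gives
((m+n) t / m)^m ((m+n) (1-t) / n)^n ≤ 1, hence σ(m,n) ≤ (x/t)^(2m) (y/(1-t))^(2n). When
y < 1 - t the series over n is dominated by a geometric one, so it is at most C_t (x/t)^(2m) and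
its m-th root has limsup at most (x/t)^2. Letting t increase to 1 - y gives
(x / (1 - y))^2 = (a_p / (d - a_q))^2. -/

lemma pow_mul_pow_le_one_of_le_one {t : ℝ} (ht₀ : 0 ≤ t) (ht₁ : t ≤ 1) {m n : ℕ}
    (hm : 0 < m) (hn : 0 < n) :
    (((m : ℝ) + n) * t / m) ^ m * (((m : ℝ) + n) * (1 - t) / n) ^ n ≤ 1 := by
  set s : ℝ := (m : ℝ) + n
  have hs₀ : 0 < s := by positivity
  have hp : 0 ≤ s * t / m := by positivity
  have hq : 0 ≤ s * (1 - t) / n := div_nonneg (mul_nonneg hs₀.le (by linarith)) n.cast_nonneg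
  -- weighted AM-GM with weights m/s, n/s: the arithmetic mean of s t/m and s (1-t)/n is 1
  have amgm := Real.geom_mean_le_arith_mean2_weighted (by positivity) (by positivity) hp hq
    (by rw [← add_div, div_self hs₀.ne'] : (m : ℝ) / s + n / s = 1)
  have mean_eq : (m : ℝ) / s * (s * t / m) + n / s * (s * (1 - t) / n) = 1 := by
    field_simp
    ring
  rw [mean_eq] at amgm
  have h := Real.rpow_le_one (by positivity) amgm hs₀.le
  rwa [Real.mul_rpow (by positivity) (by positivity), ← Real.rpow_mul hp, ← Real.rpow_mul hq,
    div_mul_cancel₀ _ hs₀.ne', div_mul_cancel₀ _ hs₀.ne', Real.rpow_natCast,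
    Real.rpow_natCast] at h

lemma sigmaTerm_nonneg (a_p a_q d : ℝ) (m n : ℕ) : 0 ≤ sigmaTerm a_p a_q d m n := by
  unfold sigmaTerm
  simp only [pow_mul]
  positivity

lemma limsup_rpow_one_div_le_of_le_mul_pow_s8 {f : ℕ → ℝ} {K c : ℝ} (hf : ∀ m, 0 ≤ f m)
    (hK : 0 < K) (hc : 0 ≤ c) (hle : ∀ᶠ m in atTop, f m ≤ K * c ^ m) :
    limsup (fun m : ℕ => f m ^ ((1 : ℝ) / m)) atTop ≤ c := by
  have hroot : Tendsto (fun m : ℕ => K ^ ((1 : ℝ) / m) * c) atTop (𝓝 c) := by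
    simpa using ((Real.continuousAt_const_rpow hK.ne').tendsto.comp
      tendsto_one_div_atTop_nhds_zero_nat).mul_const c
  have hev : ∀ᶠ m : ℕ in atTop, f m ^ ((1 : ℝ) / m) ≤ K ^ ((1 : ℝ) / m) * c := by
    filter_upwards [hle, eventually_gt_atTop 0] with m hm hm₀
    calc f m ^ ((1 : ℝ) / m) ≤ (K * c ^ m) ^ ((1 : ℝ) / m) :=
          Real.rpow_le_rpow (hf m) hm (by positivity)
      _ = K ^ ((1 : ℝ) / m) * c := by
          rw [Real.mul_rpow hK.le (by positivity), one_div, Real.pow_rpow_inv_natCast hc hm₀.ne']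
  calc limsup (fun m : ℕ => f m ^ ((1 : ℝ) / m)) atTop
      ≤ limsup (fun m : ℕ => K ^ ((1 : ℝ) / m) * c) atTop :=
        limsup_le_limsup hev (isCoboundedUnder_le_of_le atTop fun m => by
          have := hf m; positivity) hroot.isBoundedUnder_le
    _ = c := hroot.limsup_eq

section

variable {a_p a_q d t : ℝ} (ht₀ : 0 < t) (ht₁ : t < 1)
include ht₀ ht₁

lemma sigmaTerm_le {m n : ℕ} (hm : 0 < m) (hn : 0 < n) :
    sigmaTerm a_p a_q d m n ≤ ((a_p / d / t) ^ 2) ^ m * ((a_q / d / (1 - t)) ^ 2) ^ n := by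
  set B := (((m : ℝ) + n) * t / m) ^ m * (((m : ℝ) + n) * (1 - t) / n) ^ n
  have hB : B ^ 2 ≤ 1 := by
    have hB₀ : 0 ≤ B :=
      mul_nonneg (by positivity) (pow_nonneg (div_nonneg (mul_nonneg (by positivity) (by linarith)) n.cast_nonneg) _)
    exact pow_le_one₀ hB₀ (pow_mul_pow_le_one_of_le_one ht₀.le ht₁.le hm hn)
  have hm' : (m : ℝ) ≠ 0 := by positivity
  have hn' : (n : ℝ) ≠ 0 := by positivity
  have ht' : 1 - t ≠ 0 := by linarith
  have e₁ : ((m : ℝ) + n) / m = ((m + n) * t / m) / t := by field_simp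
  have e₂ : ((m : ℝ) + n) / n = ((m + n) * (1 - t) / n) / (1 - t) := by field_simp
  have regroup : ∀ P Q x y : ℝ, (P / t) ^ (2 * m) * (Q / (1 - t)) ^ (2 * n) * x ^ (2 * m)
      * y ^ (2 * n) = (P ^ m * Q ^ n) ^ 2 * (((x / t) ^ 2) ^ m * ((y / (1 - t)) ^ 2) ^ n) :=
    fun _ _ _ _ => by ring
  have factor : sigmaTerm a_p a_q d m n
      = B ^ 2 * (((a_p / d / t) ^ 2) ^ m * ((a_q / d / (1 - t)) ^ 2) ^ n) := by
    unfold sigmaTerm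
    rw [e₁, e₂, regroup]
  rw [factor]
  exact mul_le_of_le_one_left (by positivity) hB

variable (hr : (a_q / d / (1 - t)) ^ 2 < 1)
include hr

lemma sigmaTerm_succ_le_geometric {m : ℕ} (hm : 0 < m) (n : ℕ) :
    sigmaTerm a_p a_q d m (n + 1)
      ≤ ((a_p / d / t) ^ 2) ^ m * ((a_q / d / (1 - t)) ^ 2) ^ n := by
  refine (sigmaTerm_le ht₀ ht₁ hm n.succ_pos).trans ?_
  exact mul_le_mul_of_nonneg_left (pow_le_pow_of_le_one (by positivity) hr.le n.le_succ)
    (by positivity)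

lemma summable_sigmaTerm_succ {m : ℕ} (hm : 0 < m) :
    Summable (fun n : ℕ => sigmaTerm a_p a_q d m (n + 1)) :=
  .of_nonneg_of_le (fun _ => sigmaTerm_nonneg _ _ _ _ _)
    (sigmaTerm_succ_le_geometric ht₀ ht₁ hr hm)
    ((summable_geometric_of_lt_one (by positivity) hr).mul_left _)

lemma tsum_sigmaTerm_succ_le {m : ℕ} (hm : 0 < m) :
    ∑' n : ℕ, sigmaTerm a_p a_q d m (n + 1)
      ≤ (1 - (a_q / d / (1 - t)) ^ 2)⁻¹ * ((a_p / d / t) ^ 2) ^ m := by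
  have hgeom := summable_geometric_of_lt_one (by positivity) hr
  calc ∑' n : ℕ, sigmaTerm a_p a_q d m (n + 1)
      ≤ ∑' n : ℕ, ((a_p / d / t) ^ 2) ^ m * ((a_q / d / (1 - t)) ^ 2) ^ n :=
        Summable.tsum_le_tsum (sigmaTerm_succ_le_geometric ht₀ ht₁ hr hm)
          (summable_sigmaTerm_succ ht₀ ht₁ hr hm) (hgeom.mul_left _)
    _ = _ := by rw [tsum_mul_left, tsum_geometric_of_lt_one (by positivity) hr, mul_comm]

lemma limsup_tsum_sigmaTerm_le :
    limsup (fun m : ℕ => (∑' n : ℕ, sigmaTerm a_p a_q d m (n + 1)) ^ ((1 : ℝ) / m)) atTop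
      ≤ (a_p / d / t) ^ 2 :=
  limsup_rpow_one_div_le_of_le_mul_pow_s8 (fun _ => tsum_nonneg fun _ => sigmaTerm_nonneg _ _ _ _ _)
    (inv_pos.2 (sub_pos.2 hr)) (sq_nonneg _)
    ((eventually_gt_atTop 0).mono fun _ hm => tsum_sigmaTerm_succ_le ht₀ ht₁ hr hm)

end

theorem sigma_sum_growth_rate_general (a_p a_q d : ℝ) (haq : 0 < a_q)
    (haqd : a_q < d) :
    (∀ m : ℕ, 1 ≤ m → Summable (fun n : ℕ => sigmaTerm a_p a_q d m (n + 1))) ∧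
    limsup
      (fun m : ℕ => (∑' n : ℕ, sigmaTerm a_p a_q d m (n + 1)) ^ ((1 : ℝ) / m)) atTop
      ≤ (a_p / (d - a_q)) ^ 2 := by
  have hd : 0 < d := haq.trans haqd
  have hy₀ : 0 < a_q / d := div_pos haq hd
  have hy₁ : a_q / d < 1 := (div_lt_one hd).2 haqd
  have hr : ∀ t, t < 1 - a_q / d → (a_q / d / (1 - t)) ^ 2 < 1 := fun t ht =>
    pow_lt_one₀ (div_nonneg hy₀.le (by linarith)) ((div_lt_one (by linarith)).2 (by linarith))
      two_ne_zero
  refine ⟨fun m hm => summable_sigmaTerm_succ (t := (1 - a_q / d) / 2) (by linarith)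
    (by linarith) (hr _ (by linarith)) hm, ?_⟩
  -- let t increase to 1 - a_q / d in the bound limsup ≤ (a_p / d / t) ^ 2
  have hlim : Tendsto (fun t => (a_p / d / t) ^ 2) (𝓝[<] (1 - a_q / d))
      (𝓝 ((a_p / (d - a_q)) ^ 2)) := by
    have hval : (a_p / d / (1 - a_q / d)) ^ 2 = (a_p / (d - a_q)) ^ 2 := by
      congr 1; field_simp
    rw [← hval]
    exact ((continuousAt_const.div continuousAt_id (sub_pos.2 hy₁).ne').pow 2).tendsto.mono_left
      nhdsWithin_le_nhds
  refine ge_of_tendsto hlim ?_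
  filter_upwards [Ioo_mem_nhdsLT (by linarith : (0 : ℝ) < 1 - a_q / d)] with t ht
  exact limsup_tsum_sigmaTerm_le ht.1 (by linarith [ht.2]) (hr t ht.2)

theorem sigma_sum_growth_rate (a_p a_q d : ℝ) (hap : 0 < a_p) (haq : 0 < a_q)
    (haqd : a_q < d) (hsep : a_p < d - a_q) :
    (∀ m : ℕ, 1 ≤ m → Summable (fun n : ℕ => sigmaTerm a_p a_q d m (n + 1))) ∧
    limsup
      (fun m : ℕ => (∑' n : ℕ, sigmaTerm a_p a_q d m (n + 1)) ^ ((1 : ℝ) / m)) atTop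
      ≤ (a_p / (d - a_q)) ^ 2 :=
  sigma_sum_growth_rate_general a_p a_q d haq haqd
end
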